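/- arXiv:1605.08625 — 6 statements merged into one kernel-verified Lean document; each statement's English description precedes it below -/
import Mathlib

section
/- Let b > 2 be real. Let (Ω, F, P) be a probability space with a filtration (F_n)_{n≥0}, and let (V_n)_{n≥1} be a sequence of random variables such that V_n is F_n-measurable, V_n takes values in {-2, -1, 1}, and almost surely P(V_n = -2 | F_{n-1}) ≤ 2/(2+b) and P(V_n = -1 | F_{n-1}) ≤ 2/(2+b). Then for every real v ≥ 1 and every n ≥ 1, E[v^{-(V_1 + V_2 + ⋯ + V_n)}] ≤ ((2v² + 2v + (b-2)/v)/(2+b))^n. -/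
/-!
Write `Sₙ = V₁ + ⋯ + Vₙ`. Since `Vₙ₊₁ ∈ {-2, -1, 1}`,
`v ^ (-Vₙ₊₁) = v⁻¹ + (v² - v⁻¹) 𝟙{Vₙ₊₁ = -2} + (v - v⁻¹) 𝟙{Vₙ₊₁ = -1}`, with nonnegative
coefficients when `v ≥ 1`. Multiplying by the `ℱₙ`-measurable weight `v ^ (-Sₙ) ≥ 0` and taking
expectations, each indicator can be replaced by its conditional expectation given `ℱₙ`, which is at
most `2 / (2 + b)`. This gives `E[v ^ (-Sₙ₊₁)] ≤ γ(v, b) E[v ^ (-Sₙ)]`, and induction finishes.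
-/

open MeasureTheory

section

variable {Ω : Type*} {mΩ : MeasurableSpace Ω} {μ : Measure Ω}

theorem inv_le_self_and_inv_le_sq {v : ℝ} (hv : 1 ≤ v) : v⁻¹ ≤ v ∧ v⁻¹ ≤ v ^ 2 := by
  have hinv : v⁻¹ ≤ 1 := inv_le_one_of_one_le₀ hv
  constructor <;> nlinarith

theorem integral_mul_indicator_le_of_condExp_indicator_le [IsFiniteMeasure μ]
    {m : MeasurableSpace Ω} (hm : m ≤ mΩ) {X : Ω → ℝ} (hXm : StronglyMeasurable[m] X)
    (hXi : Integrable X μ) (hX0 : 0 ≤ᵐ[μ] X) {A : Set Ω} (hA : MeasurableSet[mΩ] A) {c : ℝ}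
    (hc : ∀ᵐ ω ∂μ, μ[A.indicator (fun _ => (1 : ℝ)) | m] ω ≤ c) :
    ∫ ω, X ω * A.indicator (fun _ => (1 : ℝ)) ω ∂μ ≤ c * ∫ ω, X ω ∂μ := by
  set ind := A.indicator (fun _ => (1 : ℝ))
  have hind : Integrable ind μ := (integrable_const 1).indicator hA
  have hXind : Integrable (X * ind) μ :=
    hXi.mul_bdd hind.aestronglyMeasurable (ae_of_all _ fun ω =>
      (norm_indicator_le_norm_self (fun _ => (1 : ℝ)) ω).trans norm_one.le)
  have hpull := condExp_mul_of_stronglyMeasurable_left hXm hXind hind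
  calc ∫ ω, X ω * ind ω ∂μ = ∫ ω, μ[X * ind | m] ω ∂μ := (integral_condExp hm).symm
    _ = ∫ ω, X ω * μ[ind | m] ω ∂μ := integral_congr_ae hpull
    _ ≤ ∫ ω, X ω * c ∂μ := by
      refine integral_mono_ae (integrable_condExp.congr hpull) (hXi.mul_const c) ?_
      filter_upwards [hc, hX0] with ω hcω hXω
      exact mul_le_mul_of_nonneg_left hcω hXω
    _ = c * ∫ ω, X ω ∂μ := by rw [integral_mul_const, mul_comm]

theorem mul_rpow_neg_eq_of_forall_mem (v : ℝ) {W : Ω → ℝ}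
    (hW : ∀ ω, W ω = -2 ∨ W ω = -1 ∨ W ω = 1) (g : Ω → ℝ) :
    (fun ω => g ω * v ^ (-W ω)) = fun ω => v⁻¹ * g ω
      + (v ^ 2 - v⁻¹) * (g ω * {ω | W ω = -2}.indicator (fun _ => (1 : ℝ)) ω)
      + (v - v⁻¹) * (g ω * {ω | W ω = -1}.indicator (fun _ => (1 : ℝ)) ω) := by
  funext ω
  simp only [Set.indicator_apply, Set.mem_ofPred_eq]
  rcases hW ω with h | h | h <;> norm_num [h, Real.rpow_neg_one] <;> ring

theorem integrable_mul_indicator_one {g : Ω → ℝ} (hg : Integrable g μ) {A : Set Ω}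
    (hA : MeasurableSet A) : Integrable (fun ω => g ω * A.indicator (fun _ => (1 : ℝ)) ω) μ := by
  simpa only [← Set.indicator_mul_right, mul_one] using hg.indicator hA

theorem integrable_mul_rpow_neg_of_forall_mem (v : ℝ) {W : Ω → ℝ}
    (hWm : Measurable W) (hW : ∀ ω, W ω = -2 ∨ W ω = -1 ∨ W ω = 1) {g : Ω → ℝ}
    (hg : Integrable g μ) : Integrable (fun ω => g ω * v ^ (-W ω)) μ := by
  rw [mul_rpow_neg_eq_of_forall_mem v hW]
  have hA₂ := integrable_mul_indicator_one hg (hWm (measurableSet_singleton (-2)))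
  have hA₁ := integrable_mul_indicator_one hg (hWm (measurableSet_singleton (-1)))
  exact ((hg.const_mul _).add (hA₂.const_mul _)).add (hA₁.const_mul _)

theorem integral_mul_rpow_neg_le [IsFiniteMeasure μ] {m : MeasurableSpace Ω} (hm : m ≤ mΩ)
    {g : Ω → ℝ} (hgm : StronglyMeasurable[m] g) (hgi : Integrable g μ) (hg0 : 0 ≤ᵐ[μ] g)
    {W : Ω → ℝ} (hWm : Measurable[mΩ] W) (hW : ∀ ω, W ω = -2 ∨ W ω = -1 ∨ W ω = 1) {c₂ c₁ : ℝ}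
    (hc₂ : ∀ᵐ ω ∂μ, μ[{ω | W ω = -2}.indicator (fun _ => (1 : ℝ)) | m] ω ≤ c₂)
    (hc₁ : ∀ᵐ ω ∂μ, μ[{ω | W ω = -1}.indicator (fun _ => (1 : ℝ)) | m] ω ≤ c₁)
    {v : ℝ} (hv : 1 ≤ v) :
    ∫ ω, g ω * v ^ (-W ω) ∂μ ≤ (v⁻¹ + (v ^ 2 - v⁻¹) * c₂ + (v - v⁻¹) * c₁) * ∫ ω, g ω ∂μ := by
  have hA₂ : MeasurableSet[mΩ] {ω | W ω = -2} := hWm (measurableSet_singleton _)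
  have hA₁ : MeasurableSet[mΩ] {ω | W ω = -1} := hWm (measurableSet_singleton _)
  have hi₂ := (integrable_mul_indicator_one hgi hA₂).const_mul (v ^ 2 - v⁻¹)
  have hi₁ := (integrable_mul_indicator_one hgi hA₁).const_mul (v - v⁻¹)
  have hI₂ := integral_mul_indicator_le_of_condExp_indicator_le hm hgm hgi hg0 hA₂ hc₂
  have hI₁ := integral_mul_indicator_le_of_condExp_indicator_le hm hgm hgi hg0 hA₁ hc₁
  obtain ⟨hcoef₁, hcoef₂⟩ := inv_le_self_and_inv_le_sq hv
  rw [mul_rpow_neg_eq_of_forall_mem v hW, integral_add _ hi₁, integral_add _ hi₂,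
    integral_const_mul, integral_const_mul, integral_const_mul]
  · linarith [mul_le_mul_of_nonneg_left hI₂ (sub_nonneg.2 hcoef₂),
      mul_le_mul_of_nonneg_left hI₁ (sub_nonneg.2 hcoef₁)]
  exacts [hgi.const_mul _, (hgi.const_mul _).add hi₂]

theorem integral_rpow_neg_sum_le [IsProbabilityMeasure μ] {ℱ : Filtration ℕ mΩ}
    {V : ℕ → Ω → ℝ} (hmeas : ∀ n, 1 ≤ n → StronglyMeasurable[ℱ n] (V n))
    (hrange : ∀ n, 1 ≤ n → ∀ ω, V n ω = -2 ∨ V n ω = -1 ∨ V n ω = 1) {c₂ c₁ : ℝ}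
    (hc₂0 : 0 ≤ c₂) (hc₁0 : 0 ≤ c₁)
    (hc₂ : ∀ n, 1 ≤ n → ∀ᵐ ω ∂μ,
      (μ[Set.indicator {ω | V n ω = -2} (fun _ => (1 : ℝ)) | ℱ (n - 1)]) ω ≤ c₂)
    (hc₁ : ∀ n, 1 ≤ n → ∀ᵐ ω ∂μ,
      (μ[Set.indicator {ω | V n ω = -1} (fun _ => (1 : ℝ)) | ℱ (n - 1)]) ω ≤ c₁)
    {v : ℝ} (hv : 1 ≤ v) (n : ℕ) :
    ∫ ω, v ^ (-(∑ i ∈ Finset.Icc 1 n, V i ω)) ∂μ ≤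
      (v⁻¹ + (v ^ 2 - v⁻¹) * c₂ + (v - v⁻¹) * c₁) ^ n := by
  have hv0 : 0 < v := one_pos.trans_le hv
  have hκ : 0 ≤ v⁻¹ + (v ^ 2 - v⁻¹) * c₂ + (v - v⁻¹) * c₁ := by
    obtain ⟨hcoef₁, hcoef₂⟩ := inv_le_self_and_inv_le_sq hv
    have := sub_nonneg.2 hcoef₁
    have := sub_nonneg.2 hcoef₂
    positivity
  set g : ℕ → Ω → ℝ := fun n ω => v ^ (-(∑ i ∈ Finset.Icc 1 n, V i ω))
  have hg_meas (n : ℕ) : StronglyMeasurable[ℱ n] (g n) := by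
    have hS : StronglyMeasurable[ℱ n] (fun ω => ∑ i ∈ Finset.Icc 1 n, V i ω) :=
      Finset.stronglyMeasurable_fun_sum _ fun i hi =>
        (hmeas i (Finset.mem_Icc.1 hi).1).mono (ℱ.mono (Finset.mem_Icc.1 hi).2)
    exact (measurable_const.pow hS.measurable.neg).stronglyMeasurable
  have hg_succ (n : ℕ) : g (n + 1) = fun ω => g n ω * v ^ (-V (n + 1) ω) := by
    funext ω
    simp only [g, Finset.sum_Icc_succ_top (Nat.le_add_left 1 n), neg_add, Real.rpow_add hv0]
  suffices ∀ n, Integrable (g n) μ ∧ ∫ ω, g n ω ∂μ ≤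
      (v⁻¹ + (v ^ 2 - v⁻¹) * c₂ + (v - v⁻¹) * c₁) ^ n from (this n).2
  intro n
  induction n with
  | zero => simp [g]
  | succ n ih =>
    have hn : 1 ≤ n + 1 := Nat.le_add_left 1 n
    have hVm : Measurable[mΩ] (V (n + 1)) := ((hmeas _ hn).mono (ℱ.le _)).measurable
    have hg0 : 0 ≤ᵐ[μ] g n := ae_of_all _ fun ω => (Real.rpow_pos_of_pos hv0 _).le
    rw [hg_succ, pow_succ']
    exact ⟨integrable_mul_rpow_neg_of_forall_mem v hVm (hrange _ hn) ih.1,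
      (integral_mul_rpow_neg_le (ℱ.le n) (hg_meas n) ih.1 hg0 hVm (hrange _ hn) (hc₂ _ hn)
        (hc₁ _ hn) hv).trans (mul_le_mul_of_nonneg_left ih.2 hκ)⟩

end

theorem exponential_moment_bound_general
    {Ω : Type*} {mΩ : MeasurableSpace Ω} (P : Measure Ω) [IsProbabilityMeasure P]
    (ℱ : Filtration ℕ mΩ) (b : ℝ) (hb : 2 < b)
    (V : ℕ → Ω → ℝ)
    (hmeas : ∀ n, 1 ≤ n → StronglyMeasurable[ℱ n] (V n))
    (hrange : ∀ n, 1 ≤ n → ∀ ω, V n ω = -2 ∨ V n ω = -1 ∨ V n ω = 1)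
    (h2 : ∀ n, 1 ≤ n → ∀ᵐ ω ∂P,
      (P[Set.indicator {ω | V n ω = -2} (fun _ => (1 : ℝ)) | ℱ (n - 1)]) ω ≤ 2 / (2 + b))
    (h1 : ∀ n, 1 ≤ n → ∀ᵐ ω ∂P,
      (P[Set.indicator {ω | V n ω = -1} (fun _ => (1 : ℝ)) | ℱ (n - 1)]) ω ≤ 2 / (2 + b))
    (v : ℝ) (hv : 1 ≤ v) (n : ℕ) :
    ∫ ω, v ^ (-(∑ i ∈ Finset.Icc 1 n, V i ω)) ∂P ≤
      ((2 * v^2 + 2 * v + (b - 2) / v) / (2 + b)) ^ n := by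
  have hp : 0 ≤ 2 / (2 + b) := div_nonneg zero_le_two (by linarith)
  have hγ : v⁻¹ + (v ^ 2 - v⁻¹) * (2 / (2 + b)) + (v - v⁻¹) * (2 / (2 + b)) =
      (2 * v ^ 2 + 2 * v + (b - 2) / v) / (2 + b) := by
    have : v ≠ 0 := (one_pos.trans_le hv).ne'
    have : 2 + b ≠ 0 := by linarith
    field_simp
    ring
  simpa only [hγ] using integral_rpow_neg_sum_le hmeas hrange hp hp h2 h1 hv n

theorem exponential_moment_bound
    {Ω : Type*} {mΩ : MeasurableSpace Ω} (P : Measure Ω) [IsProbabilityMeasure P]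
    (ℱ : Filtration ℕ mΩ) (b : ℝ) (hb : 2 < b)
    (V : ℕ → Ω → ℝ)
    (hmeas : ∀ n, 1 ≤ n → StronglyMeasurable[ℱ n] (V n))
    (hrange : ∀ n, 1 ≤ n → ∀ ω, V n ω = -2 ∨ V n ω = -1 ∨ V n ω = 1)
    (h2 : ∀ n, 1 ≤ n → ∀ᵐ ω ∂P,
      (P[Set.indicator {ω | V n ω = -2} (fun _ => (1 : ℝ)) | ℱ (n - 1)]) ω ≤ 2 / (2 + b))
    (h1 : ∀ n, 1 ≤ n → ∀ᵐ ω ∂P,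
      (P[Set.indicator {ω | V n ω = -1} (fun _ => (1 : ℝ)) | ℱ (n - 1)]) ω ≤ 2 / (2 + b))
    (v : ℝ) (hv : 1 ≤ v) (n : ℕ) (hn : 1 ≤ n) :
    ∫ ω, v ^ (-(∑ i ∈ Finset.Icc 1 n, V i ω)) ∂P ≤
      ((2 * v^2 + 2 * v + (b - 2) / v) / (2 + b)) ^ n :=
  exponential_moment_bound_general P ℱ b hb V hmeas hrange h2 h1 v hv n
end

section
/- Let b > 2 be real, and let μ_b denote the probability measure on ℝ given by μ_b = (2/(2+b))·δ_{-2} + (2/(2+b))·δ_{-1} + ((b-2)/(2+b))·δ_1, where δ_x is the Dirac mass at x. Let (Ω, F, P) be a probability space with a filtration (F_n)_{n≥0}, and let (V_n)_{n≥1} be a sequence of random variables such that V_n is F_n-measurable, V_n takes values in {-2, -1, 1}, and almost surely P(V_n = -2 | F_{n-1}) ≤ 2/(2+b) and P(V_n = -1 | F_{n-1}) ≤ 2/(2+b). Then for every n ≥ 1 and every real t, P(V_1 + V_2 + ⋯ + V_n ≤ t) ≤ μ_b^{*n}((-∞, t]), where μ_b^{*n} denotes the n-fold convolution of μ_b with itself.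 In other words, V_1 + ⋯ + V_n stochastically dominates the sum of n i.i.d. random variables with law μ_b. -/
/-!
Write `S k = V 1 + ⋯ + V k` and `a = 2/(2+b)`. On `{S k ≤ t - 1}` the event `{S (k+1) ≤ t}` holds
whatever `V (k+1)` is; on the `ℱ k`-measurable bands `{t - 1 < S k ≤ t + 2}` and
`{t - 1 < S k ≤ t + 1}` it requires `V (k+1) = -2`, resp. `-1`, each of conditional probability
at most `a`. Hence
`P(S (k+1) ≤ t) ≤ a P(S k ≤ t + 2) + a P(S k ≤ t + 1) + (1 - 2a) P(S k ≤ t - 1)`.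
The weights are nonnegative because `b > 2`, so the right-hand side is monotone in the
distribution function of `S k`, and with that distribution function replaced by the one of
`μ_b^{*k}` it is exactly the distribution function of `μ_b^{*k} * μ_b`; induction on `k` concludes.
-/

open MeasureTheory

/-- The comparison measure μ_b = (2/(2+b))·δ₋₂ + (2/(2+b))·δ₋₁ + ((b-2)/(2+b))·δ₁ on ℝ. -/
noncomputable def muB (b : ℝ) : Measure ℝ :=
  ENNReal.ofReal (2 / (2 + b)) • Measure.dirac (-2)
    + ENNReal.ofReal (2 / (2 + b)) • Measure.dirac (-1)
    + ENNReal.ofReal ((b - 2) / (2 + b)) • Measure.dirac 1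

/-- n-fold convolution power of a measure on ℝ (with `μ^{*0}` the Dirac mass at 0). -/
noncomputable def convPow (μ : Measure ℝ) : ℕ → Measure ℝ
  | 0 => Measure.dirac 0
  | n + 1 => (convPow μ n).conv μ

open Set

instance sFinite_muB (b : ℝ) : SFinite (muB b) := by
  unfold muB; infer_instance

instance sFinite_convPow (μ : Measure ℝ) [SFinite μ] : ∀ n, SFinite (convPow μ n)
  | 0 => by rw [convPow]; infer_instance
  | n + 1 => by rw [convPow, Measure.conv]; have := sFinite_convPow μ n; infer_instance

lemma conv_dirac_apply_Iic (ν : Measure ℝ) [SFinite ν] (x t : ℝ) :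
    (ν.conv (Measure.dirac x)) (Iic t) = ν (Iic (t - x)) := by
  rw [Measure.conv_dirac, Measure.map_apply (measurable_add_const x) measurableSet_Iic,
    preimage_add_const_Iic]

lemma conv_muB_apply_Iic (ν : Measure ℝ) [SFinite ν] (b t : ℝ) :
    (ν.conv (muB b)) (Iic t)
      = ENNReal.ofReal (2 / (2 + b)) * ν (Iic (t + 2))
        + ENNReal.ofReal (2 / (2 + b)) * ν (Iic (t + 1))
        + ENNReal.ofReal ((b - 2) / (2 + b)) * ν (Iic (t - 1)) := by
  simp only [muB, Measure.conv_add, Measure.conv_smul_right, Measure.add_apply,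
    Measure.smul_apply, smul_eq_mul, conv_dirac_apply_Iic, sub_neg_eq_add]

section

variable {Ω : Type*} {m mΩ : MeasurableSpace Ω} {P : Measure Ω} [IsFiniteMeasure P]

lemma measure_inter_le_of_condExp_indicator_le (hm : m ≤ mΩ) {A B : Set Ω}
    (hB : MeasurableSet B) (hA : MeasurableSet[m] A) {a : ℝ}
    (h : ∀ᵐ ω ∂P, (P[B.indicator (fun _ => (1 : ℝ)) | m]) ω ≤ a) :
    P (B ∩ A) ≤ ENNReal.ofReal a * P A := by
  have hint : Integrable (B.indicator fun _ => (1 : ℝ)) P := (integrable_const 1).indicator hB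
  have hBA : P.real (B ∩ A) = ∫ ω in A, (P[B.indicator (fun _ => (1 : ℝ)) | m]) ω ∂P := by
    rw [setIntegral_condExp hm hint hA, setIntegral_indicator hB, setIntegral_const, smul_eq_mul,
      mul_one, inter_comm]
  have hle : P.real (B ∩ A) ≤ P.real A * a := by
    rw [hBA, ← smul_eq_mul, ← setIntegral_const]
    exact setIntegral_mono_ae integrable_condExp.integrableOn (integrable_const a).integrableOn h
  calc P (B ∩ A) = ENNReal.ofReal (P.real (B ∩ A)) := (ofReal_measureReal (measure_ne_top _ _)).symm
    _ ≤ ENNReal.ofReal (P.real A * a) := ENNReal.ofReal_le_ofReal hle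
    _ = ENNReal.ofReal a * P A := by
      rw [ENNReal.ofReal_mul measureReal_nonneg, ofReal_measureReal (measure_ne_top _ _), mul_comm]

lemma measure_add_le_of_condExp_le (hm : m ≤ mΩ) {S V : Ω → ℝ} (hS : Measurable[m] S)
    (hV : Measurable V) (hrange : ∀ ω, V ω = -2 ∨ V ω = -1 ∨ V ω = 1) {a c : ℝ}
    (ha : 0 ≤ a) (hc : 0 ≤ c) (hac : a + a + c = 1)
    (h2 : ∀ᵐ ω ∂P, (P[{ω | V ω = -2}.indicator (fun _ => (1 : ℝ)) | m]) ω ≤ a)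
    (h1 : ∀ᵐ ω ∂P, (P[{ω | V ω = -1}.indicator (fun _ => (1 : ℝ)) | m]) ω ≤ a) (t : ℝ) :
    P {ω | S ω + V ω ≤ t}
      ≤ ENNReal.ofReal a * P {ω | S ω ≤ t + 2} + ENNReal.ofReal a * P {ω | S ω ≤ t + 1}
        + ENNReal.ofReal c * P {ω | S ω ≤ t - 1} := by
  set A : ℝ → Set Ω := fun s => {ω | S ω ≤ s}
  have hA : ∀ s, MeasurableSet[m] (A s) := fun s => hS measurableSet_Iic
  have hmono : Monotone A := fun s s' hs ω (hω : S ω ≤ s) => hω.trans hs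
  have hB : ∀ v, MeasurableSet {ω | V ω = v} := fun v => hV (measurableSet_singleton v)
  have hcover : {ω | S ω + V ω ≤ t} ⊆ A (t - 1) ∪ {ω | V ω = -2} ∩ (A (t + 2) \ A (t - 1))
      ∪ {ω | V ω = -1} ∩ (A (t + 1) \ A (t - 1)) := by
    intro ω (hω : S ω + V ω ≤ t)
    by_cases h0 : S ω ≤ t - 1
    · exact Or.inl (Or.inl h0)
    have h0' : t - 1 < S ω := not_le.1 h0
    rcases hrange ω with hv | hv | hv
    · exact Or.inl (Or.inr ⟨hv, show S ω ≤ t + 2 by linarith, h0⟩)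
    · exact Or.inr ⟨hv, show S ω ≤ t + 1 by linarith, h0⟩
    · exact absurd (show S ω ≤ t - 1 by linarith) h0
  have hsplit : ∀ s, t - 1 ≤ s → P (A s) = P (A (t - 1)) + P (A s \ A (t - 1)) := by
    intro s hs
    rw [measure_add_sdiff (hm _ (hA _)).nullMeasurableSet,
      union_eq_self_of_subset_left (hmono hs)]
  calc P {ω | S ω + V ω ≤ t}
      ≤ P (A (t - 1)) + P ({ω | V ω = -2} ∩ (A (t + 2) \ A (t - 1)))
        + P ({ω | V ω = -1} ∩ (A (t + 1) \ A (t - 1))) :=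
        (measure_mono hcover).trans <| (measure_union_le _ _).trans <|
          add_le_add_left (measure_union_le _ _) _
    _ ≤ P (A (t - 1)) + ENNReal.ofReal a * P (A (t + 2) \ A (t - 1))
        + ENNReal.ofReal a * P (A (t + 1) \ A (t - 1)) := by
      gcongr <;> exact measure_inter_le_of_condExp_indicator_le hm (hB _)
        ((hA _).diff (hA _)) ‹_›
    _ = (ENNReal.ofReal a + ENNReal.ofReal a + ENNReal.ofReal c) * P (A (t - 1))
        + ENNReal.ofReal a * P (A (t + 2) \ A (t - 1))
        + ENNReal.ofReal a * P (A (t + 1) \ A (t - 1)) := by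
      rw [← ENNReal.ofReal_add ha ha, ← ENNReal.ofReal_add (by positivity) hc, hac,
        ENNReal.ofReal_one, one_mul]
    _ = _ := by
      rw [hsplit (t + 2) (by linarith), hsplit (t + 1) (by linarith)]
      ring

end

theorem stochastic_domination_general
    {Ω : Type*} {mΩ : MeasurableSpace Ω} (P : Measure Ω) [IsProbabilityMeasure P]
    (ℱ : Filtration ℕ mΩ) (b : ℝ) (hb : 2 < b)
    (V : ℕ → Ω → ℝ)
    (hmeas : ∀ n, 1 ≤ n → StronglyMeasurable[ℱ n] (V n))
    (hrange : ∀ n, 1 ≤ n → ∀ ω, V n ω = -2 ∨ V n ω = -1 ∨ V n ω = 1)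
    (h2 : ∀ n, 1 ≤ n → ∀ᵐ ω ∂P,
      (P[Set.indicator {ω | V n ω = -2} (fun _ => (1 : ℝ)) | ℱ (n - 1)]) ω ≤ 2 / (2 + b))
    (h1 : ∀ n, 1 ≤ n → ∀ᵐ ω ∂P,
      (P[Set.indicator {ω | V n ω = -1} (fun _ => (1 : ℝ)) | ℱ (n - 1)]) ω ≤ 2 / (2 + b))
    (n : ℕ) (t : ℝ) :
    P {ω | ∑ i ∈ Finset.Icc 1 n, V i ω ≤ t} ≤ convPow (muB b) n (Set.Iic t) := by
  have hweights : 2 / (2 + b) + 2 / (2 + b) + (b - 2) / (2 + b) = 1 := by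
    field_simp; ring
  induction n generalizing t with
  | zero =>
    by_cases ht : 0 ≤ t <;> simp [convPow, ht]
  | succ k ih =>
    have hS : StronglyMeasurable[ℱ k] fun ω => ∑ i ∈ Finset.Icc 1 k, V i ω :=
      Finset.stronglyMeasurable_fun_sum _ fun i hi =>
        (hmeas i (Finset.mem_Icc.1 hi).1).mono (ℱ.mono (Finset.mem_Icc.1 hi).2)
    simp only [Finset.sum_Icc_succ_top (Nat.le_add_left 1 k)]
    rw [convPow, conv_muB_apply_Iic]
    refine (measure_add_le_of_condExp_le (ℱ.le k) hS.measurable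
      ((hmeas _ k.succ_pos).mono (ℱ.le _)).measurable (hrange _ k.succ_pos)
      (by positivity) (div_nonneg (by linarith) (by linarith)) hweights
      (h2 _ k.succ_pos) (h1 _ k.succ_pos) t).trans ?_
    gcongr <;> exact ih _

theorem stochastic_domination
    {Ω : Type*} {mΩ : MeasurableSpace Ω} (P : Measure Ω) [IsProbabilityMeasure P]
    (ℱ : Filtration ℕ mΩ) (b : ℝ) (hb : 2 < b)
    (V : ℕ → Ω → ℝ)
    (hmeas : ∀ n, 1 ≤ n → StronglyMeasurable[ℱ n] (V n))
    (hrange : ∀ n, 1 ≤ n → ∀ ω, V n ω = -2 ∨ V n ω = -1 ∨ V n ω = 1)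
    (h2 : ∀ n, 1 ≤ n → ∀ᵐ ω ∂P,
      (P[Set.indicator {ω | V n ω = -2} (fun _ => (1 : ℝ)) | ℱ (n - 1)]) ω ≤ 2 / (2 + b))
    (h1 : ∀ n, 1 ≤ n → ∀ᵐ ω ∂P,
      (P[Set.indicator {ω | V n ω = -1} (fun _ => (1 : ℝ)) | ℱ (n - 1)]) ω ≤ 2 / (2 + b))
    (n : ℕ) (hn : 1 ≤ n) (t : ℝ) :
    P {ω | ∑ i ∈ Finset.Icc 1 n, V i ω ≤ t} ≤ convPow (muB b) n (Set.Iic t) :=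
  stochastic_domination_general P ℱ b hb V hmeas hrange h2 h1 n t
end

section
/- Let b > 10⁴ be real. Let (Ω, F, P) be a probability space with a filtration (F_n)_{n≥0}, and let (V_n)_{n≥1} be a sequence of random variables such that V_n is F_n-measurable, V_n takes values in {-2, -1, 1}, and almost surely P(V_n = -2 | F_{n-1}) ≤ 2/(2+b) and P(V_n = -1 | F_{n-1}) ≤ 2/(2+b). Then for every integer w ≥ 2 and every integer l ≥ 1, P(V_1 + V_2 + ⋯ + V_l ≤ 2 - w) ≤ 4^{2-w} · 2^{-l}. -/
open MeasureTheory

theorem large_deviation_estimate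
    {Ω : Type*} {mΩ : MeasurableSpace Ω} (P : Measure Ω) [IsProbabilityMeasure P]
    (ℱ : Filtration ℕ mΩ) (b : ℝ) (hb : b > 10^4)
    (V : ℕ → Ω → ℝ)
    (hmeas : ∀ n, 1 ≤ n → StronglyMeasurable[ℱ n] (V n))
    (hrange : ∀ n, 1 ≤ n → ∀ ω, V n ω = -2 ∨ V n ω = -1 ∨ V n ω = 1)
    (h2 : ∀ n, 1 ≤ n → ∀ᵐ ω ∂P,
      (P[Set.indicator {ω | V n ω = -2} (fun _ => (1 : ℝ)) | ℱ (n - 1)]) ω ≤ 2 / (2 + b))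
    (h1 : ∀ n, 1 ≤ n → ∀ᵐ ω ∂P,
      (P[Set.indicator {ω | V n ω = -1} (fun _ => (1 : ℝ)) | ℱ (n - 1)]) ω ≤ 2 / (2 + b))
    (w : ℕ) (hw : 2 ≤ w) (l : ℕ) (hl : 1 ≤ l) :
    P {ω | ∑ i ∈ Finset.Icc 1 l, V i ω ≤ 2 - (w : ℝ)} ≤
      ENNReal.ofReal ((4 : ℝ) ^ ((2 : ℤ) - (w : ℤ)) * (2 : ℝ) ^ (-(l : ℤ))) := by
  -- the exponential weight
  set G : ℕ → Ω → ℝ := fun n ω =>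
    if V n ω = -2 then (16 : ℝ) else if V n ω = -1 then 4 else 1/4 with hG
  have hGpos : ∀ n ω, 0 < G n ω := by
    intro n ω; simp only [hG]; split_ifs <;> norm_num
  have hGle : ∀ n ω, G n ω ≤ 16 := by
    intro n ω; simp only [hG]; split_ifs <;> norm_num
  have hGmeas : ∀ n, 1 ≤ n → Measurable[ℱ n] (G n) := by
    intro n hn
    have hV : Measurable[ℱ n] (V n) := (hmeas n hn).measurable
    exact Measurable.ite (hV (measurableSet_singleton (-2)))
      measurable_const
      (Measurable.ite (hV (measurableSet_singleton (-1))) measurable_const measurable_const)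
  have hGmeas0 : ∀ n, 1 ≤ n → Measurable (G n) := fun n hn => (hGmeas n hn).mono (ℱ.le n) le_rfl
  have hGint : ∀ n, 1 ≤ n → Integrable (G n) P := by
    intro n hn
    refine Integrable.mono' (integrable_const (16 : ℝ)) (hGmeas0 n hn).aestronglyMeasurable ?_
    filter_upwards with ω
    rw [Real.norm_eq_abs, abs_of_pos (hGpos n ω)]; exact hGle n ω
  -- key conditional expectation bound
  have hcond : ∀ n, 1 ≤ n → ∀ᵐ ω ∂P, (P[G n | ℱ (n-1)]) ω ≤ 1/2 := by
    intro n hn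
    set A : Set Ω := {ω | V n ω = -2} with hA
    set B : Set Ω := {ω | V n ω = -1} with hB
    have hVm : Measurable (V n) := (hmeas n hn).measurable.mono (ℱ.le n) le_rfl
    have hAm : MeasurableSet A := hVm (measurableSet_singleton (-2))
    have hBm : MeasurableSet B := hVm (measurableSet_singleton (-1))
    have hAint : Integrable (A.indicator (fun _ => (1:ℝ))) P :=
      (integrable_const (1:ℝ)).indicator hAm
    have hBint : Integrable (B.indicator (fun _ => (1:ℝ))) P :=
      (integrable_const (1:ℝ)).indicator hBm
    have hdecomp : G n = (fun _ => (1/4 : ℝ)) +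
        ((63/4 : ℝ) • A.indicator (fun _ => (1:ℝ)) + (15/4 : ℝ) • B.indicator (fun _ => (1:ℝ))) := by
      funext ω
      rcases hrange n hn ω with h | h | h <;>
        · simp only [Pi.add_apply, Pi.smul_apply, smul_eq_mul, hG, hA, hB,
            Set.indicator_apply, Set.mem_setOf_eq, h]
          norm_num
    have e1 := condExp_add (μ := P) (m := ℱ (n-1)) (integrable_const (1/4 : ℝ))
      ((hAint.smul (63/4 : ℝ)).add (hBint.smul (15/4 : ℝ)))
    have e2 := condExp_add (μ := P) (m := ℱ (n-1)) (hAint.smul (63/4 : ℝ)) (hBint.smul (15/4 : ℝ))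
    have e3 := condExp_smul (μ := P) (m := ℱ (n-1)) (63/4 : ℝ) (A.indicator (fun _ => (1:ℝ)))
    have e4 := condExp_smul (μ := P) (m := ℱ (n-1)) (15/4 : ℝ) (B.indicator (fun _ => (1:ℝ)))
    have hb2 : (2 : ℝ) / (2 + b) ≤ 2 / 10002 := by
      apply div_le_div_of_nonneg_left (by norm_num) (by norm_num) (by linarith [hb])
    rw [hdecomp]
    filter_upwards [e1, e2, e3, e4, h2 n hn, h1 n hn] with ω he1 he2 he3 he4 hA2 hB1
    rw [he1]
    simp only [Pi.add_apply]
    rw [he2]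
    simp only [Pi.add_apply]
    rw [he3, he4, condExp_const (ℱ.le (n-1)) (1/4 : ℝ)]
    simp only [Pi.smul_apply, smul_eq_mul]
    have hxA : ((P[A.indicator (fun _ => (1:ℝ)) | ℱ (n-1)]) ω) ≤ 2/10002 := le_trans hA2 hb2
    have hxB : ((P[B.indicator (fun _ => (1:ℝ)) | ℱ (n-1)]) ω) ≤ 2/10002 := le_trans hB1 hb2
    have hxA0 : 0 ≤ (P[A.indicator (fun _ => (1:ℝ)) | ℱ (n-1)]) ω ∨ True := Or.inr trivial
    linarith
  -- product of the weights
  set F : ℕ → Ω → ℝ := fun k ω => ∏ i ∈ Finset.Icc 1 k, G i ω with hF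
  have hFpos : ∀ k ω, 0 < F k ω := fun k ω => Finset.prod_pos fun i _ => hGpos i ω
  have hFmeas : ∀ k, Measurable[ℱ k] (F k) := by
    intro k
    apply Finset.measurable_prod
    intro i hi
    simp only [Finset.mem_Icc] at hi
    exact ((hGmeas i hi.1).mono (ℱ.mono hi.2) le_rfl)
  have hFint : ∀ k, Integrable (F k) P := by
    intro k
    refine Integrable.mono' (integrable_const ((16 : ℝ) ^ k))
      ((hFmeas k).mono (ℱ.le k) le_rfl).aestronglyMeasurable ?_
    filter_upwards with ω
    rw [Real.norm_eq_abs, abs_of_pos (hFpos k ω)]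
    calc F k ω ≤ ∏ i ∈ Finset.Icc 1 k, (16:ℝ) :=
          Finset.prod_le_prod (fun i _ => (hGpos i ω).le) (fun i _ => hGle i ω)
      _ ≤ 16 ^ k := by
          rw [Finset.prod_const]
          exact pow_le_pow_right₀ (by norm_num) (by simp [Nat.card_Icc])
  have hkey : ∀ k, ∫ ω, F k ω ∂P ≤ (1/2 : ℝ) ^ k := by
    intro k
    induction k with
    | zero => simp [hF]
    | succ m ih =>
      have hmul : F (m+1) = F m * G (m+1) := by
        funext ω
        simp only [hF, Pi.mul_apply]
        rw [Finset.prod_Icc_succ_top (by omega)]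
      have hFGint : Integrable (F m * G (m+1)) P := by
        rw [← hmul]; exact hFint (m+1)
      have hpull : P[F m * G (m+1) | ℱ m] =ᵐ[P] F m * P[G (m+1) | ℱ m] :=
        condExp_mul_of_stronglyMeasurable_left (hFmeas m).stronglyMeasurable hFGint (hGint (m+1) (by omega))
      have hcm : ∀ᵐ ω ∂P, (P[G (m+1) | ℱ m]) ω ≤ 1/2 := by
        have := hcond (m+1) (by omega)
        simpa using this
      have hintmul : Integrable (fun ω => F m ω * (P[G (m+1) | ℱ m]) ω) P :=
        (integrable_condExp.congr hpull)
      calc ∫ ω, F (m+1) ω ∂P = ∫ ω, (F m * G (m+1)) ω ∂P := by rw [hmul]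
        _ = ∫ ω, (P[F m * G (m+1) | ℱ m]) ω ∂P := (integral_condExp (ℱ.le m)).symm
        _ = ∫ ω, F m ω * (P[G (m+1) | ℱ m]) ω ∂P := integral_congr_ae hpull
        _ ≤ ∫ ω, F m ω * (1/2 : ℝ) ∂P := by
            refine integral_mono_ae hintmul ((hFint m).mul_const _) ?_
            filter_upwards [hcm] with ω hω
            exact mul_le_mul_of_nonneg_left hω (hFpos m ω).le
        _ = (∫ ω, F m ω ∂P) * (1/2 : ℝ) := by rw [integral_mul_const]
        _ ≤ (1/2 : ℝ)^m * (1/2 : ℝ) := by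
            apply mul_le_mul_of_nonneg_right ih (by norm_num)
        _ = (1/2 : ℝ)^(m+1) := by ring
  -- pointwise lower bound on the bad set
  set S := {ω | ∑ i ∈ Finset.Icc 1 l, V i ω ≤ 2 - (w : ℝ)} with hS
  set ε : ℝ := (4 : ℝ) ^ (w - 2 : ℕ) with hε
  have hεpos : (0:ℝ) < ε := by positivity
  have hGexp : ∀ i, 1 ≤ i → ∀ ω, G i ω = Real.exp (-V i ω * Real.log 4) := by
    intro i hi ω
    rcases hrange i hi ω with h | h | h
    · simp only [hG, h, if_pos rfl]
      rw [show -(-2 : ℝ) * Real.log 4 = (2:ℕ) * Real.log 4 by norm_num,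
        Real.exp_nat_mul, Real.exp_log (by norm_num)]
      norm_num
    · simp only [hG, h]
      norm_num
      rw [Real.exp_log (by norm_num)]
    · simp only [hG, h]
      norm_num
      rw [Real.exp_neg, Real.exp_log (by norm_num)]
      norm_num
  have hsub : S ⊆ {ω | ε ≤ F l ω} := by
    intro ω hω
    simp only [hS, Set.mem_setOf_eq] at hω
    have hFexp : F l ω = Real.exp ((-∑ i ∈ Finset.Icc 1 l, V i ω) * Real.log 4) := by
      rw [hF]
      rw [show (-∑ i ∈ Finset.Icc 1 l, V i ω) * Real.log 4
          = ∑ i ∈ Finset.Icc 1 l, (-V i ω * Real.log 4) by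
        rw [← Finset.sum_mul, ← Finset.sum_neg_distrib]]
      rw [Real.exp_sum]
      apply Finset.prod_congr rfl
      intro i hi
      simp only [Finset.mem_Icc] at hi
      exact hGexp i hi.1 ω
    simp only [Set.mem_setOf_eq]
    rw [hFexp, hε]
    have : ((w:ℝ) - 2) * Real.log 4 ≤ (-∑ i ∈ Finset.Icc 1 l, V i ω) * Real.log 4 := by
      apply mul_le_mul_of_nonneg_right (by linarith) (Real.log_nonneg (by norm_num))
    calc (4:ℝ) ^ (w - 2 : ℕ) = Real.exp (((w - 2 : ℕ) : ℝ) * Real.log 4) := by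
          rw [Real.exp_nat_mul, Real.exp_log (by norm_num)]
      _ ≤ Real.exp ((-∑ i ∈ Finset.Icc 1 l, V i ω) * Real.log 4) := by
          apply Real.exp_le_exp.mpr
          have hcast : ((w - 2 : ℕ) : ℝ) = (w:ℝ) - 2 := by
            push_cast [Nat.cast_sub hw]; ring
          rw [hcast]; exact this
  -- Markov inequality
  have hmarkov : ε * (P {ω | ε ≤ F l ω}).toReal ≤ ∫ ω, F l ω ∂P :=
    mul_meas_ge_le_integral_of_nonneg
      (Filter.Eventually.of_forall fun ω => (hFpos l ω).le) (hFint l) ε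
  have hPS : (P S).toReal ≤ (1/2 : ℝ)^l / ε := by
    have hmono : (P S).toReal ≤ (P {ω | ε ≤ F l ω}).toReal := by
      apply ENNReal.toReal_mono (measure_ne_top _ _) (measure_mono hsub)
    rw [le_div_iff₀ hεpos, mul_comm]
    calc ε * (P S).toReal ≤ ε * (P {ω | ε ≤ F l ω}).toReal :=
          mul_le_mul_of_nonneg_left hmono hεpos.le
      _ ≤ ∫ ω, F l ω ∂P := hmarkov
      _ ≤ (1/2 : ℝ)^l := hkey l
  have htarget : (1/2 : ℝ)^l / ε = (4 : ℝ) ^ ((2 : ℤ) - (w : ℤ)) * (2 : ℝ) ^ (-(l : ℤ)) := by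
    have h4 : (4 : ℝ) ^ ((2 : ℤ) - (w : ℤ)) = ε⁻¹ := by
      rw [hε, show ((2 : ℤ) - (w : ℤ)) = -((w - 2 : ℕ) : ℤ) by push_cast [Nat.cast_sub hw]; ring,
        zpow_neg, zpow_natCast]
    have h2' : (2 : ℝ) ^ (-(l : ℤ)) = (1/2 : ℝ)^l := by
      rw [zpow_neg, zpow_natCast, one_div, inv_pow]
    rw [h4, h2']
    field_simp
  calc P S = ENNReal.ofReal ((P S).toReal) := (ENNReal.ofReal_toReal (measure_ne_top _ _)).symm
    _ ≤ ENNReal.ofReal ((4 : ℝ) ^ ((2 : ℤ) - (w : ℤ)) * (2 : ℝ) ^ (-(l : ℤ))) := by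
        apply ENNReal.ofReal_le_ofReal
        rw [← htarget]; exact hPS
end

section
/- Let b > 10⁴ be real. Let (Ω, F, P) be a probability space with a filtration (F_n)_{n≥0}, and let (V_n)_{n≥1} be a sequence of random variables such that V_n is F_n-measurable, V_n takes values in {-2, -1, 1}, and almost surely P(V_n = -2 | F_{n-1}) ≤ 2/(2+b) and P(V_n = -1 | F_{n-1}) ≤ 2/(2+b). Then for every integer w ≥ 2 and every integer n ≥ 1, P(there exists l ≥ n with V_1 + V_2 + ⋯ + V_l ≤ 2 - w) ≤ 4^{2-w} · 2^{1-n}. -/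
/-! With `Sₗ = V₁ + ⋯ + Vₗ`, the process `4 ^ (-Sₗ)` is a supermartingale with contraction
factor `1/2`: given `ℱₗ`, the weight `4 ^ (-Vₗ₊₁)` is `1/4` unless `Vₗ₊₁ ∈ {-2, -1}`, and these
two values have conditional probability at most `2/(2+b) ≤ 1/78`, so its conditional mean is at
most `1/4 + (63/4 + 15/4)/78 = 1/2`. Hence `E[4 ^ (-Sₗ)] ≤ 2⁻ˡ`, Markov's inequality gives
`P(Sₗ ≤ 2 - w) ≤ 4 ^ (2 - w) 2⁻ˡ`, and summing over `l ≥ n` gives the bound. -/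

open MeasureTheory

section

variable {Ω : Type*} {mΩ : MeasurableSpace Ω}

theorem integral_mul_le_of_condExp_le (μ : Measure Ω) [IsFiniteMeasure μ]
    {m : MeasurableSpace Ω} (hm : m ≤ mΩ) {Y X : Ω → ℝ} (hY : StronglyMeasurable[m] Y)
    (hY0 : 0 ≤ Y) {C : ℝ} (hYC : ∀ ω, Y ω ≤ C) (hX : Integrable X μ) {c : ℝ}
    (hc : μ[X | m] ≤ᵐ[μ] fun _ => c) :
    ∫ ω, Y ω * X ω ∂μ ≤ c * ∫ ω, Y ω ∂μ := by
  have hYae : AEStronglyMeasurable[mΩ] Y μ := (hY.mono hm).aestronglyMeasurable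
  have hYnorm : ∀ᵐ ω ∂μ, ‖Y ω‖ ≤ C :=
    ae_of_all _ fun ω => by rw [Real.norm_of_nonneg (hY0 ω)]; exact hYC ω
  have hpull : μ[Y * X | m] =ᵐ[μ] Y * μ[X | m] :=
    condExp_mul_of_stronglyMeasurable_left hY (hX.bdd_mul hYae hYnorm) hX
  calc ∫ ω, Y ω * X ω ∂μ = ∫ ω, (μ[Y * X | m]) ω ∂μ := (integral_condExp hm).symm
    _ = ∫ ω, Y ω * (μ[X | m]) ω ∂μ := integral_congr_ae hpull
    _ ≤ ∫ ω, Y ω * c ∂μ := by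
        refine integral_mono_ae (integrable_condExp.bdd_mul hYae hYnorm)
          ((Integrable.of_bound hYae C hYnorm).mul_const c) ?_
        filter_upwards [hc] with ω hω
        exact mul_le_mul_of_nonneg_left hω (hY0 ω)
    _ = c * ∫ ω, Y ω ∂μ := by rw [integral_mul_const, mul_comm]

theorem prod_Icc_le_pow {z : ℕ → ℝ} (hz0 : ∀ i, 0 ≤ z i) {C : ℝ} (hzC : ∀ i, 1 ≤ i → z i ≤ C)
    (l : ℕ) : ∏ i ∈ Finset.Icc 1 l, z i ≤ C ^ l := by
  simpa using Finset.prod_le_prod (fun i _ => hz0 i) fun i hi => hzC i (Finset.mem_Icc.mp hi).1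

theorem integrable_prod_Icc_of_le (μ : Measure Ω) [IsFiniteMeasure μ] {Z : ℕ → Ω → ℝ}
    (hZm : ∀ i, 1 ≤ i → StronglyMeasurable (Z i)) (hZ0 : ∀ i, 0 ≤ Z i) {C : ℝ}
    (hZC : ∀ i, 1 ≤ i → ∀ ω, Z i ω ≤ C) (l : ℕ) :
    Integrable (fun ω => ∏ i ∈ Finset.Icc 1 l, Z i ω) μ := by
  refine Integrable.of_bound (Finset.stronglyMeasurable_fun_prod _ fun i hi =>
    hZm i (Finset.mem_Icc.mp hi).1).aestronglyMeasurable (C ^ l) (ae_of_all _ fun ω => ?_)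
  rw [Real.norm_of_nonneg (Finset.prod_nonneg fun i _ => hZ0 i ω)]
  exact prod_Icc_le_pow (hZ0 · ω) (hZC · · ω) l

theorem integral_prod_Icc_le_pow_of_condExp_le (μ : Measure Ω) [IsProbabilityMeasure μ]
    (ℱ : Filtration ℕ mΩ) {Z : ℕ → Ω → ℝ} (hZm : ∀ i, 1 ≤ i → StronglyMeasurable[ℱ i] (Z i))
    (hZ0 : ∀ i, 0 ≤ Z i) {C : ℝ} (hZC : ∀ i, 1 ≤ i → ∀ ω, Z i ω ≤ C) {q : ℝ} (hq : 0 ≤ q)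
    (hZq : ∀ l, μ[Z (l + 1) | ℱ l] ≤ᵐ[μ] fun _ => q) (l : ℕ) :
    ∫ ω, ∏ i ∈ Finset.Icc 1 l, Z i ω ∂μ ≤ q ^ l := by
  induction l with
  | zero => simp
  | succ l ih =>
    have hYm : StronglyMeasurable[ℱ l] fun ω => ∏ i ∈ Finset.Icc 1 l, Z i ω :=
      Finset.stronglyMeasurable_fun_prod _ fun i hi =>
        (hZm i (Finset.mem_Icc.mp hi).1).mono (ℱ.mono (Finset.mem_Icc.mp hi).2)
    have hZint : Integrable (Z (l + 1)) μ :=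
      Integrable.of_bound ((hZm _ l.succ_pos).mono (ℱ.le _)).aestronglyMeasurable C
        (ae_of_all _ fun ω => by rw [Real.norm_of_nonneg (hZ0 _ ω)]; exact hZC _ l.succ_pos ω)
    calc ∫ ω, ∏ i ∈ Finset.Icc 1 (l + 1), Z i ω ∂μ
        = ∫ ω, (∏ i ∈ Finset.Icc 1 l, Z i ω) * Z (l + 1) ω ∂μ := by
          simp only [Finset.prod_Icc_succ_top (Nat.le_add_left 1 l)]
      _ ≤ q * ∫ ω, ∏ i ∈ Finset.Icc 1 l, Z i ω ∂μ :=
          integral_mul_le_of_condExp_le μ (ℱ.le l) hYm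
            (fun ω => Finset.prod_nonneg fun i _ => hZ0 i ω)
            (fun ω => prod_Icc_le_pow (hZ0 · ω) (hZC · · ω) l) hZint (hZq l)
      _ ≤ q ^ (l + 1) := by rw [pow_succ']; exact mul_le_mul_of_nonneg_left ih hq

theorem four_rpow_neg_eq {v : ℝ} (hv : v = -2 ∨ v = -1 ∨ v = 1) :
    (4 : ℝ) ^ (-v) =
      1 / 4 + 63 / 4 * (if v = -2 then 1 else 0) + 15 / 4 * (if v = -1 then 1 else 0) := by
  rcases hv with rfl | rfl | rfl <;> norm_num

theorem condExp_four_rpow_neg_le (μ : Measure Ω) [IsFiniteMeasure μ] {m : MeasurableSpace Ω}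
    (hm : m ≤ mΩ) {X : Ω → ℝ} (hX : Measurable[mΩ] X) (hXv : ∀ ω, X ω = -2 ∨ X ω = -1 ∨ X ω = 1)
    {c : ℝ} (h2 : μ[{ω | X ω = -2}.indicator (fun _ => (1 : ℝ)) | m] ≤ᵐ[μ] fun _ => c)
    (h1 : μ[{ω | X ω = -1}.indicator (fun _ => (1 : ℝ)) | m] ≤ᵐ[μ] fun _ => c) :
    μ[fun ω => (4 : ℝ) ^ (-X ω) | m] ≤ᵐ[μ] fun _ => 1 / 4 + 39 / 2 * c := by
  set I₂ := {ω | X ω = -2}.indicator fun _ => (1 : ℝ)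
  set I₁ := {ω | X ω = -1}.indicator fun _ => (1 : ℝ)
  have hI₂ : Integrable I₂ μ := (integrable_const 1).indicator (hX (measurableSet_singleton _))
  have hI₁ : Integrable I₁ μ := (integrable_const 1).indicator (hX (measurableSet_singleton _))
  have hdecomp : (fun ω => (4 : ℝ) ^ (-X ω))
      = (fun _ => (1 / 4 : ℝ)) + ((63 / 4 : ℝ) • I₂ + (15 / 4 : ℝ) • I₁) := by
    ext ω
    simp only [four_rpow_neg_eq (hXv ω), I₂, I₁, Set.indicator_apply, Set.mem_ofPred_eq,
      Pi.add_apply, Pi.smul_apply, smul_eq_mul]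
    ring
  rw [hdecomp]
  have hI₂' := hI₂.smul (63 / 4 : ℝ)
  have hI₁' := hI₁.smul (15 / 4 : ℝ)
  filter_upwards [condExp_add (integrable_const (1 / 4 : ℝ)) (hI₂'.add hI₁') m,
    condExp_add hI₂' hI₁' m, condExp_smul (63 / 4 : ℝ) I₂ m, condExp_smul (15 / 4 : ℝ) I₁ m,
    h2, h1] with ω hsum hsum' hsmul₂ hsmul₁ hω₂ hω₁
  rw [hsum, Pi.add_apply, hsum', Pi.add_apply, hsmul₂, hsmul₁, condExp_const hm]
  simp only [Pi.smul_apply, smul_eq_mul]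
  linarith

theorem measure_le_le_ofReal_rpow_mul_integral (μ : Measure Ω) [IsFiniteMeasure μ] {S : Ω → ℝ}
    {a : ℝ} (ha : 1 ≤ a) (hint : Integrable (fun ω => a ^ (-S ω)) μ) (t : ℝ) :
    μ {ω | S ω ≤ t} ≤ ENNReal.ofReal (a ^ t * ∫ ω, a ^ (-S ω) ∂μ) := by
  have hpos : ∀ s : ℝ, 0 < a ^ s := fun s => Real.rpow_pos_of_pos (by linarith) s
  have hsub : {ω | S ω ≤ t} ⊆ {ω | (a ^ t)⁻¹ ≤ a ^ (-S ω)} := fun ω hω => by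
    rw [← Real.rpow_neg (by linarith)]
    exact Real.rpow_le_rpow_of_exponent_le ha (neg_le_neg hω)
  have hmarkov := mul_meas_ge_le_integral_of_nonneg (ae_of_all _ fun ω => (hpos (-S ω)).le) hint
    (a ^ t)⁻¹
  rw [inv_mul_le_iff₀ (hpos t)] at hmarkov
  refine (measure_mono hsub).trans ?_
  rw [ENNReal.le_ofReal_iff_toReal_le (measure_ne_top _ _) (le_trans ENNReal.toReal_nonneg hmarkov)]
  exact hmarkov

theorem measure_exists_ge_le_of_le_geometric (μ : Measure Ω) {E : ℕ → Set Ω} {a r : ℝ}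
    (ha : 0 ≤ a) (hr0 : 0 ≤ r) (hr1 : r < 1) (hE : ∀ l, μ (E l) ≤ ENNReal.ofReal (a * r ^ l))
    (n : ℕ) : μ {ω | ∃ l, n ≤ l ∧ ω ∈ E l} ≤ ENNReal.ofReal (a * r ^ n / (1 - r)) := by
  have hset : {ω | ∃ l, n ≤ l ∧ ω ∈ E l} = ⋃ k, E (n + k) := by
    ext ω
    simp only [Set.mem_ofPred_eq, Set.mem_iUnion]
    constructor
    · rintro ⟨l, hl, hω⟩
      exact ⟨l - n, by rwa [Nat.add_sub_cancel' hl]⟩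
    · rintro ⟨k, hω⟩
      exact ⟨n + k, n.le_add_right k, hω⟩
  calc μ {ω | ∃ l, n ≤ l ∧ ω ∈ E l} ≤ ∑' k, μ (E (n + k)) := hset ▸ measure_iUnion_le _
    _ ≤ ∑' k, ENNReal.ofReal (a * r ^ n * r ^ k) :=
        ENNReal.tsum_le_tsum fun k => (hE _).trans_eq (by rw [pow_add, mul_assoc])
    _ = ENNReal.ofReal (∑' k, a * r ^ n * r ^ k) :=
        (ENNReal.ofReal_tsum_of_nonneg (fun k => by positivity)
          ((summable_geometric_of_lt_one hr0 hr1).mul_left _)).symm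
    _ = ENNReal.ofReal (a * r ^ n / (1 - r)) := by
        rw [tsum_mul_left, tsum_geometric_of_lt_one hr0 hr1, div_eq_mul_inv]

theorem measure_sum_Icc_le_le_of_condExp_le (μ : Measure Ω) [IsProbabilityMeasure μ]
    (ℱ : Filtration ℕ mΩ) {V : ℕ → Ω → ℝ} (hmeas : ∀ n, 1 ≤ n → StronglyMeasurable[ℱ n] (V n))
    (hrange : ∀ n, 1 ≤ n → ∀ ω, V n ω = -2 ∨ V n ω = -1 ∨ V n ω = 1) {c : ℝ} (hc : c ≤ 1 / 78)
    (h2 : ∀ n, 1 ≤ n → ∀ᵐ ω ∂μ,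
      (μ[Set.indicator {ω | V n ω = -2} (fun _ => (1 : ℝ)) | ℱ (n - 1)]) ω ≤ c)
    (h1 : ∀ n, 1 ≤ n → ∀ᵐ ω ∂μ,
      (μ[Set.indicator {ω | V n ω = -1} (fun _ => (1 : ℝ)) | ℱ (n - 1)]) ω ≤ c)
    (t : ℝ) (l : ℕ) :
    μ {ω | ∑ i ∈ Finset.Icc 1 l, V i ω ≤ t} ≤ ENNReal.ofReal ((4 : ℝ) ^ t * (1 / 2) ^ l) := by
  set Z : ℕ → Ω → ℝ := fun i ω => (4 : ℝ) ^ (-V i ω)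
  have hZm : ∀ i, 1 ≤ i → StronglyMeasurable[ℱ i] (Z i) := fun i hi =>
    ((hmeas i hi).measurable.neg.const_pow 4).stronglyMeasurable
  have hZ0 : ∀ i, 0 ≤ Z i := fun i ω => Real.rpow_nonneg (by norm_num) _
  have hZC : ∀ i, 1 ≤ i → ∀ ω, Z i ω ≤ 16 := fun i hi ω => by
    rcases hrange i hi ω with h | h | h <;> simp only [Z, h] <;> norm_num
  have hZq : ∀ k, μ[Z (k + 1) | ℱ k] ≤ᵐ[μ] fun _ => 1 / 2 := fun k =>
    (condExp_four_rpow_neg_le μ (ℱ.le k) ((hmeas _ k.succ_pos).mono (ℱ.le _)).measurable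
      (hrange _ k.succ_pos) (h2 (k + 1) k.succ_pos) (h1 (k + 1) k.succ_pos)).mono
      fun ω hω => hω.trans (by linarith)
  have hprod : (fun ω => ∏ i ∈ Finset.Icc 1 l, Z i ω)
      = fun ω => (4 : ℝ) ^ (-∑ i ∈ Finset.Icc 1 l, V i ω) := by
    ext ω
    rw [← Finset.sum_neg_distrib, Real.rpow_sum_of_pos (by norm_num)]
  have hint := integrable_prod_Icc_of_le μ (fun i hi => (hZm i hi).mono (ℱ.le i)) hZ0 hZC l
  have hdecay := integral_prod_Icc_le_pow_of_condExp_le μ ℱ hZm hZ0 hZC (by norm_num) hZq l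
  rw [hprod] at hint hdecay
  exact (measure_le_le_ofReal_rpow_mul_integral μ (by norm_num) hint t).trans
    (ENNReal.ofReal_le_ofReal (mul_le_mul_of_nonneg_left hdecay (by positivity)))

end

theorem large_deviation_estimate_summed_general
    {Ω : Type*} {mΩ : MeasurableSpace Ω} (P : Measure Ω) [IsProbabilityMeasure P]
    (ℱ : Filtration ℕ mΩ) (b : ℝ) (hb : b > 10^4)
    (V : ℕ → Ω → ℝ)
    (hmeas : ∀ n, 1 ≤ n → StronglyMeasurable[ℱ n] (V n))
    (hrange : ∀ n, 1 ≤ n → ∀ ω, V n ω = -2 ∨ V n ω = -1 ∨ V n ω = 1)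
    (h2 : ∀ n, 1 ≤ n → ∀ᵐ ω ∂P,
      (P[Set.indicator {ω | V n ω = -2} (fun _ => (1 : ℝ)) | ℱ (n - 1)]) ω ≤ 2 / (2 + b))
    (h1 : ∀ n, 1 ≤ n → ∀ᵐ ω ∂P,
      (P[Set.indicator {ω | V n ω = -1} (fun _ => (1 : ℝ)) | ℱ (n - 1)]) ω ≤ 2 / (2 + b))
    (w : ℕ) (n : ℕ) :
    P {ω | ∃ l, n ≤ l ∧ ∑ i ∈ Finset.Icc 1 l, V i ω ≤ 2 - (w : ℝ)} ≤
      ENNReal.ofReal ((4 : ℝ) ^ ((2 : ℤ) - (w : ℤ)) * (2 : ℝ) ^ (1 - (n : ℤ))) := by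
  have hc : 2 / (2 + b) ≤ 1 / 78 := by
    rw [div_le_iff₀ (by linarith)]
    linarith
  have hbound : (4 : ℝ) ^ (2 - (w : ℝ)) * (1 / 2) ^ n / (1 - 1 / 2)
      = (4 : ℝ) ^ ((2 : ℤ) - (w : ℤ)) * (2 : ℝ) ^ (1 - (n : ℤ)) := by
    rw [show (2 : ℝ) - w = ((2 - w : ℤ) : ℝ) by push_cast; ring, Real.rpow_intCast,
      zpow_sub₀ two_ne_zero, zpow_one, zpow_natCast, one_div, inv_pow]
    ring
  rw [← hbound]
  exact measure_exists_ge_le_of_le_geometric P (by positivity) (by norm_num) (by norm_num)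
    (measure_sum_Icc_le_le_of_condExp_le P ℱ hmeas hrange hc h2 h1 _) n

theorem large_deviation_estimate_summed
    {Ω : Type*} {mΩ : MeasurableSpace Ω} (P : Measure Ω) [IsProbabilityMeasure P]
    (ℱ : Filtration ℕ mΩ) (b : ℝ) (hb : b > 10^4)
    (V : ℕ → Ω → ℝ)
    (hmeas : ∀ n, 1 ≤ n → StronglyMeasurable[ℱ n] (V n))
    (hrange : ∀ n, 1 ≤ n → ∀ ω, V n ω = -2 ∨ V n ω = -1 ∨ V n ω = 1)
    (h2 : ∀ n, 1 ≤ n → ∀ᵐ ω ∂P,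
      (P[Set.indicator {ω | V n ω = -2} (fun _ => (1 : ℝ)) | ℱ (n - 1)]) ω ≤ 2 / (2 + b))
    (h1 : ∀ n, 1 ≤ n → ∀ᵐ ω ∂P,
      (P[Set.indicator {ω | V n ω = -1} (fun _ => (1 : ℝ)) | ℱ (n - 1)]) ω ≤ 2 / (2 + b))
    (w : ℕ) (hw : 2 ≤ w) (n : ℕ) (hn : 1 ≤ n) :
    P {ω | ∃ l, n ≤ l ∧ ∑ i ∈ Finset.Icc 1 l, V i ω ≤ 2 - (w : ℝ)} ≤
      ENNReal.ofReal ((4 : ℝ) ^ ((2 : ℤ) - (w : ℤ)) * (2 : ℝ) ^ (1 - (n : ℤ))) :=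
  large_deviation_estimate_summed_general P ℱ b hb V hmeas hrange h2 h1 w n
end

section
/- For every integer u ≥ 2, ∑_{x=1}^{u-1} 1/(x²·(u-x)²) ≤ 6/u². -/
lemma sq_bound (n : ℕ) : ∑ i ∈ Finset.range n, (1:ℝ)/((i:ℝ)+1)^2 ≤ 2 - 2/((n:ℝ)+1) := by
  induction n with
  | zero => norm_num
  | succ n ih =>
    rw [Finset.sum_range_succ]
    push_cast
    have h1 : (0:ℝ) < (n:ℝ)+1 := by positivity
    have h2 : (0:ℝ) < (n:ℝ)+1+1 := by positivity
    have key : (1:ℝ)/((n:ℝ)+1)^2 ≤ 2/((n:ℝ)+1) - 2/((n:ℝ)+1+1) := by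
      rw [div_sub_div _ _ h1.ne' h2.ne', div_le_div_iff₀ (by positivity) (by positivity)]
      nlinarith
    linarith

lemma harm_bound (n : ℕ) : ∑ i ∈ Finset.range n, (1:ℝ)/((i:ℝ)+1) ≤ ((n:ℝ)+1)/2 := by
  induction n with
  | zero => norm_num
  | succ n ih =>
    rw [Finset.sum_range_succ]
    push_cast
    rcases Nat.eq_zero_or_pos n with h | h
    · subst h; norm_num
    · have hn : (1:ℝ) ≤ (n:ℝ) := by exact_mod_cast h
      have : (1:ℝ)/((n:ℝ)+1) ≤ 1/2 := by
        apply div_le_div_of_nonneg_left <;> linarith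
      linarith

lemma key_id (x y : ℝ) (hx : x ≠ 0) (hy : y ≠ 0) (h : x + y ≠ 0) :
    1/(x^2*y^2) = 1/(x+y)^2 * (1/x^2 + 1/y^2 + 2/(x+y) * (1/x + 1/y)) := by
  field_simp
  ring

theorem convolution_sum_bound (u : ℕ) (hu : 2 ≤ u) :
    ∑ x ∈ Finset.Ico 1 u, 1 / ((x : ℝ)^2 * ((u : ℝ) - (x : ℝ))^2) ≤ 6 / (u : ℝ)^2 := by
  obtain ⟨n, rfl⟩ : ∃ n, u = n + 1 := ⟨u - 1, by omega⟩
  have hn : 1 ≤ n := by omega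
  have hu0 : (0:ℝ) < (n:ℝ) + 1 := by positivity
  rw [Finset.sum_Ico_eq_sum_range]
  simp only [Nat.add_sub_cancel]
  push_cast
  -- rewrite each term via key_id
  have hrw : ∀ i ∈ Finset.range n,
      1 / ((1+(i:ℝ))^2 * (((n:ℝ)+1) - (1+(i:ℝ)))^2)
      = 1/((n:ℝ)+1)^2 * (1/((i:ℝ)+1)^2 + 1/(((n:ℝ)+1)-((i:ℝ)+1))^2
          + 2/((n:ℝ)+1) * (1/((i:ℝ)+1) + 1/(((n:ℝ)+1)-((i:ℝ)+1)))) := by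
    intro i hi
    simp only [Finset.mem_range] at hi
    have hi' : (i:ℝ) < n := by exact_mod_cast hi
    have hx : ((i:ℝ)+1) ≠ 0 := by positivity
    have hy : ((n:ℝ)+1) - ((i:ℝ)+1) ≠ 0 := by
      have : (i:ℝ)+1 < (n:ℝ)+1 := by linarith
      linarith [this]
    have := key_id ((i:ℝ)+1) (((n:ℝ)+1)-((i:ℝ)+1)) hx hy (by
      have : ((i:ℝ)+1) + (((n:ℝ)+1)-((i:ℝ)+1)) = (n:ℝ)+1 := by ring
      rw [this]; exact hu0.ne')
    rw [show ((i:ℝ)+1) + (((n:ℝ)+1)-((i:ℝ)+1)) = (n:ℝ)+1 by ring] at this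
    rw [show (1:ℝ)+(i:ℝ) = (i:ℝ)+1 by ring]
    exact this
  rw [Finset.sum_congr rfl hrw]
  -- reflection lemmas
  have refl2 : ∑ i ∈ Finset.range n, 1/(((n:ℝ)+1)-((i:ℝ)+1))^2
      = ∑ i ∈ Finset.range n, (1:ℝ)/((i:ℝ)+1)^2 := by
    rw [← Finset.sum_range_reflect]
    apply Finset.sum_congr rfl
    intro i hi
    simp only [Finset.mem_range] at hi
    have h1 : ((n - 1 - i : ℕ):ℝ) = (n:ℝ) - 1 - (i:ℝ) := by
      have : i ≤ n - 1 := by omega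
      push_cast [Nat.cast_sub (by omega : 1 ≤ n), Nat.cast_sub this]
      ring
    rw [h1]
    ring_nf
  have refl1 : ∑ i ∈ Finset.range n, 1/(((n:ℝ)+1)-((i:ℝ)+1))
      = ∑ i ∈ Finset.range n, (1:ℝ)/((i:ℝ)+1) := by
    rw [← Finset.sum_range_reflect]
    apply Finset.sum_congr rfl
    intro i hi
    simp only [Finset.mem_range] at hi
    have h1 : ((n - 1 - i : ℕ):ℝ) = (n:ℝ) - 1 - (i:ℝ) := by
      have : i ≤ n - 1 := by omega
      push_cast [Nat.cast_sub (by omega : 1 ≤ n), Nat.cast_sub this]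
      ring
    rw [h1]
    ring_nf
  have hS := sq_bound n
  have hH := harm_bound n
  have hS2 : ∑ i ∈ Finset.range n, (1:ℝ)/((i:ℝ)+1)^2 ≤ 2 := by
    have : (0:ℝ) < 2/((n:ℝ)+1) := by positivity
    linarith
  -- expand the sum
  rw [← Finset.mul_sum]
  simp only [Finset.sum_add_distrib, ← Finset.mul_sum, refl2, refl1]
  have hexp : ∑ i ∈ Finset.range n, (1:ℝ)/((i:ℝ)+1) ≤ ((n:ℝ)+1)/2 := hH
  have hu2 : (0:ℝ) < ((n:ℝ)+1)^2 := by positivity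
  rw [div_eq_mul_inv (6:ℝ), mul_comm (6:ℝ)]
  rw [show (1:ℝ)/((n:ℝ)+1)^2 = (((n:ℝ)+1)^2)⁻¹ by rw [one_div]]
  apply mul_le_mul_of_nonneg_left _ (by positivity)
  have hmul : 2/((n:ℝ)+1) * (∑ i ∈ Finset.range n, (1:ℝ)/((i:ℝ)+1) + ∑ i ∈ Finset.range n, (1:ℝ)/((i:ℝ)+1)) ≤ 2 := by
    calc 2/((n:ℝ)+1) * (∑ i ∈ Finset.range n, (1:ℝ)/((i:ℝ)+1) + ∑ i ∈ Finset.range n, (1:ℝ)/((i:ℝ)+1))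
        ≤ 2/((n:ℝ)+1) * ((n:ℝ)+1) := by
          apply mul_le_mul_of_nonneg_left _ (by positivity)
          linarith
      _ = 2 := by field_simp
  linarith
end

section
/- For every integer w ≥ 2, 144 · 2^{-w} · ∑_{j=5}^{w-1} (1/(w-j)²) · ( ∑_{i=1}^{j-2} 1/(i²·(j-i)²) ) + 288 · ∑_{j=w}^{∞} 2^{-j} · ( ∑_{i=1}^{j-2} 1/(i²·(j-i)²) ) ≤ 10⁴ · 2^{-w}/w². -/
open Finset


lemma sum_inv_sq_aux (n : ℕ) (hn : 1 ≤ n) :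
    ∑ i ∈ Finset.Ico 1 (n+1), (1:ℝ)/(i:ℝ)^2 ≤ 2 - 1/n := by
  induction n, hn using Nat.le_induction with
  | base => norm_num
  | succ n hn ih =>
    rw [Finset.sum_Ico_succ_top (by omega)]
    have h1 : (0:ℝ) < n := by exact_mod_cast hn
    have h2 : (1:ℝ)/((n:ℝ)+1)^2 ≤ 1/n - 1/(n+1) := by
      rw [div_sub_div _ _ (ne_of_gt h1) (by positivity), div_le_div_iff₀ (by positivity) (by positivity)]
      ring_nf; nlinarith
    push_cast
    linarith

lemma sum_inv_sq_le (u : ℕ) : ∑ i ∈ Finset.Ico 1 u, (1:ℝ)/(i:ℝ)^2 ≤ 2 := by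
  match u with
  | 0 => simp
  | 1 => simp
  | (n+2) =>
    have := sum_inv_sq_aux (n+1) (by omega)
    have h1 : (0:ℝ) < (n:ℝ)+1 := by positivity
    have : (1:ℝ)/((n:ℝ)+1) ≥ 0 := by positivity
    push_cast at *
    linarith

lemma sum_inv_le (u : ℕ) (hu : 2 ≤ u) : ∑ i ∈ Finset.Ico 1 u, (1:ℝ)/(i:ℝ) ≤ u/2 := by
  induction u, hu using Nat.le_induction with
  | base => norm_num
  | succ u hu ih =>
    rw [Finset.sum_Ico_succ_top (by omega)]
    have h1 : (2:ℝ) ≤ u := by exact_mod_cast hu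
    have h2 : (1:ℝ)/(u:ℝ) ≤ 1/2 := by
      apply one_div_le_one_div_of_le <;> linarith
    push_cast
    linarith

lemma reflect_sum (u : ℕ) (g : ℝ → ℝ) :
    ∑ i ∈ Finset.Ico 1 u, g ((u:ℝ) - (i:ℝ)) = ∑ i ∈ Finset.Ico 1 u, g (i:ℝ) := by
  apply Finset.sum_nbij' (fun i => u - i) (fun i => u - i)
  · intro a ha; simp only [Finset.mem_Ico] at *; omega
  · intro a ha; simp only [Finset.mem_Ico] at *; omega
  · intro a ha; simp only [Finset.mem_Ico] at ha; omega
  · intro a ha; simp only [Finset.mem_Ico] at ha; omega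
  · intro a ha
    simp only [Finset.mem_Ico] at ha
    congr 1
    have : ((u - a : ℕ) : ℝ) = (u:ℝ) - a := by
      push_cast [Nat.cast_sub (by omega : a ≤ u)]; ring
    rw [this]



lemma conv_bound (u : ℕ) (hu : 2 ≤ u) :
    ∑ i ∈ Finset.Ico 1 u, 1/((i:ℝ)^2 * ((u:ℝ) - (i:ℝ))^2) ≤ 6/(u:ℝ)^2 := by
  have hu2 : (2:ℝ) ≤ (u:ℝ) := by exact_mod_cast hu
  have hu0 : (0:ℝ) < u := by linarith
  have key : ∑ i ∈ Finset.Ico 1 u, 1/((i:ℝ)^2 * ((u:ℝ) - (i:ℝ))^2)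
      = ∑ i ∈ Finset.Ico 1 u, ((1/(u:ℝ)^2) * (1/(i:ℝ)^2) + (1/(u:ℝ)^2) * (1/((u:ℝ)-(i:ℝ))^2)
          + ((2/(u:ℝ)^3) * (1/(i:ℝ)) + (2/(u:ℝ)^3) * (1/((u:ℝ)-(i:ℝ))))) := by
    apply Finset.sum_congr rfl
    intro i hi
    simp only [Finset.mem_Ico] at hi
    have hx : (0:ℝ) < (i:ℝ) := by exact_mod_cast hi.1
    have hy : (0:ℝ) < (u:ℝ) - (i:ℝ) := by
      have : (i:ℝ) < (u:ℝ) := by exact_mod_cast hi.2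
      linarith
    field_simp
    ring
  rw [key]
  simp only [Finset.sum_add_distrib, ← Finset.mul_sum]
  rw [reflect_sum u (fun t => 1/t^2), reflect_sum u (fun t => 1/t)]
  have hS2 := sum_inv_sq_le u
  have hS1 := sum_inv_le u hu
  have e1 : (0:ℝ) ≤ 1/(u:ℝ)^2 := by positivity
  have e2 : (0:ℝ) ≤ 2/(u:ℝ)^3 := by positivity
  have b1 : (1/(u:ℝ)^2) * (∑ i ∈ Finset.Ico 1 u, (1:ℝ)/(i:ℝ)^2) ≤ (1/(u:ℝ)^2) * 2 :=
    mul_le_mul_of_nonneg_left hS2 e1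
  have b2 : (2/(u:ℝ)^3) * (∑ i ∈ Finset.Ico 1 u, (1:ℝ)/(i:ℝ)) ≤ (2/(u:ℝ)^3) * ((u:ℝ)/2) :=
    mul_le_mul_of_nonneg_left hS1 e2
  have final : (1/(u:ℝ)^2) * 2 + (1/(u:ℝ)^2) * 2 + ((2/(u:ℝ)^3) * ((u:ℝ)/2) + (2/(u:ℝ)^3) * ((u:ℝ)/2)) = 6/(u:ℝ)^2 := by
    field_simp
    ring
  linarith

lemma inner_nonneg (j : ℕ) (s : Finset ℕ) :
    (0:ℝ) ≤ ∑ i ∈ s, 1/((i:ℝ)^2 * ((j:ℝ) - (i:ℝ))^2) := by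
  apply Finset.sum_nonneg
  intro i _
  positivity

lemma inner_bound (j : ℕ) (hj : 2 ≤ j) :
    ∑ i ∈ Finset.Ico 1 (j-1), 1/((i:ℝ)^2 * ((j:ℝ) - (i:ℝ))^2) ≤ 6/(j:ℝ)^2 := by
  refine le_trans (Finset.sum_le_sum_of_subset_of_nonneg ?_ ?_) (conv_bound j hj)
  · apply Finset.Ico_subset_Ico le_rfl; omega
  · intro i _ _; positivity

theorem final_summation_estimate (w : ℕ) (hw : 2 ≤ w) :
    144 * (2 : ℝ) ^ (-(w : ℤ)) *
        ∑ j ∈ Finset.Ico 5 w, (1 / ((w : ℝ) - (j : ℝ))^2) *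
          ∑ i ∈ Finset.Ico 1 (j - 1), 1 / ((i : ℝ)^2 * ((j : ℝ) - (i : ℝ))^2) +
      288 * ∑' k : ℕ, (2 : ℝ) ^ (-((w + k : ℕ) : ℤ)) *
          ∑ i ∈ Finset.Ico 1 ((w + k) - 1), 1 / ((i : ℝ)^2 * (((w + k : ℕ) : ℝ) - (i : ℝ))^2) ≤
      10^4 * (2 : ℝ) ^ (-(w : ℤ)) / (w : ℝ)^2 := by
  have hw2 : (2:ℝ) ≤ (w:ℝ) := by exact_mod_cast hw
  have hw0 : (0:ℝ) < (w:ℝ) := by linarith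
  have hpw : (0:ℝ) < (2:ℝ) ^ (-(w:ℤ)) := by positivity
  -- First sum bound
  have hfirst : ∑ j ∈ Finset.Ico 5 w, (1 / ((w : ℝ) - (j : ℝ))^2) *
      ∑ i ∈ Finset.Ico 1 (j - 1), 1 / ((i : ℝ)^2 * ((j : ℝ) - (i : ℝ))^2) ≤ 36/(w:ℝ)^2 := by
    have step1 : ∑ j ∈ Finset.Ico 5 w, (1 / ((w : ℝ) - (j : ℝ))^2) *
        (∑ i ∈ Finset.Ico 1 (j - 1), 1 / ((i : ℝ)^2 * ((j : ℝ) - (i : ℝ))^2)) ≤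
        ∑ j ∈ Finset.Ico 5 w, 6 * (1 / ((j:ℝ)^2 * ((w : ℝ) - (j : ℝ))^2)) := by
      apply Finset.sum_le_sum
      intro j hj
      simp only [Finset.mem_Ico] at hj
      have h1 : (1 / ((w : ℝ) - (j : ℝ))^2) *
          (∑ i ∈ Finset.Ico 1 (j - 1), 1 / ((i : ℝ)^2 * ((j : ℝ) - (i : ℝ))^2)) ≤
          (1 / ((w : ℝ) - (j : ℝ))^2) * (6/(j:ℝ)^2) :=
        mul_le_mul_of_nonneg_left (inner_bound j (by omega)) (by positivity)
      refine h1.trans (le_of_eq ?_)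
      have hj0 : ((j:ℝ))^2 ≠ 0 := by
        have : (0:ℝ) < j := by exact_mod_cast (by omega : 0 < j)
        positivity
      rw [div_mul_div_comm, one_mul, mul_comm, mul_one_div]
    refine step1.trans ?_
    rw [← Finset.mul_sum]
    have step2 : ∑ j ∈ Finset.Ico 5 w, (1 / ((j:ℝ)^2 * ((w : ℝ) - (j : ℝ))^2)) ≤
        ∑ j ∈ Finset.Ico 1 w, (1 / ((j:ℝ)^2 * ((w : ℝ) - (j : ℝ))^2)) := by
      apply Finset.sum_le_sum_of_subset_of_nonneg
      · apply Finset.Ico_subset_Ico (by omega) le_rfl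
      · intro i _ _; positivity
    have step3 := conv_bound w hw
    have : (6:ℝ) * (6/(w:ℝ)^2) = 36/(w:ℝ)^2 := by ring
    nlinarith [step2.trans step3]
  -- Second sum bound
  have hsum_g : Summable (fun k : ℕ => ((2:ℝ)^(-(w:ℤ)) * (6/(w:ℝ)^2)) * (1/2:ℝ)^k) :=
    (summable_geometric_two).mul_left _
  have hterm : ∀ k : ℕ, (2 : ℝ) ^ (-((w + k : ℕ) : ℤ)) *
      (∑ i ∈ Finset.Ico 1 ((w + k) - 1), 1 / ((i : ℝ)^2 * (((w + k : ℕ) : ℝ) - (i : ℝ))^2)) ≤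
      ((2:ℝ)^(-(w:ℤ)) * (6/(w:ℝ)^2)) * (1/2:ℝ)^k := by
    intro k
    have hpow : (2 : ℝ) ^ (-((w + k : ℕ) : ℤ)) = (2:ℝ)^(-(w:ℤ)) * (1/2:ℝ)^k := by
      push_cast
      rw [neg_add, zpow_add₀ (by norm_num : (2:ℝ) ≠ 0)]
      congr 1
      rw [zpow_neg, zpow_natCast, ← inv_pow]
      norm_num
    have hi : ∑ i ∈ Finset.Ico 1 ((w + k) - 1), 1 / ((i : ℝ)^2 * (((w + k : ℕ) : ℝ) - (i : ℝ))^2)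
        ≤ 6/(w:ℝ)^2 := by
      refine (inner_bound (w+k) (by omega)).trans ?_
      have hk : (0:ℝ) ≤ (k:ℝ) := Nat.cast_nonneg k
      have hcast : ((w+k:ℕ):ℝ) = (w:ℝ)+(k:ℝ) := by push_cast; ring
      apply div_le_div_of_nonneg_left (by norm_num) (by positivity)
      rw [hcast]
      nlinarith
    rw [hpow]
    calc (2:ℝ)^(-(w:ℤ)) * (1/2:ℝ)^k * (∑ i ∈ Finset.Ico 1 ((w + k) - 1), 1 / ((i : ℝ)^2 * (((w + k : ℕ) : ℝ) - (i : ℝ))^2))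
        ≤ (2:ℝ)^(-(w:ℤ)) * (1/2:ℝ)^k * (6/(w:ℝ)^2) :=
          mul_le_mul_of_nonneg_left hi (by positivity)
      _ = ((2:ℝ)^(-(w:ℤ)) * (6/(w:ℝ)^2)) * (1/2:ℝ)^k := by ring
  have hsum_f : Summable (fun k : ℕ => (2 : ℝ) ^ (-((w + k : ℕ) : ℤ)) *
      (∑ i ∈ Finset.Ico 1 ((w + k) - 1), 1 / ((i : ℝ)^2 * (((w + k : ℕ) : ℝ) - (i : ℝ))^2))) := by
    apply Summable.of_nonneg_of_le _ hterm hsum_g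
    intro k
    have := inner_nonneg (w+k) (Finset.Ico 1 ((w+k)-1))
    positivity
  have hsecond : ∑' k : ℕ, (2 : ℝ) ^ (-((w + k : ℕ) : ℤ)) *
      (∑ i ∈ Finset.Ico 1 ((w + k) - 1), 1 / ((i : ℝ)^2 * (((w + k : ℕ) : ℝ) - (i : ℝ))^2)) ≤
      (2:ℝ)^(-(w:ℤ)) * (12/(w:ℝ)^2) := by
    refine (Summable.tsum_le_tsum hterm hsum_f hsum_g).trans ?_
    rw [tsum_mul_left, tsum_geometric_two]
    ring_nf
    rfl
  set X := (2:ℝ)^(-(w:ℤ)) with hX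
  have A : 144 * X * (∑ j ∈ Finset.Ico 5 w, (1 / ((w : ℝ) - (j : ℝ))^2) *
      ∑ i ∈ Finset.Ico 1 (j - 1), 1 / ((i : ℝ)^2 * ((j : ℝ) - (i : ℝ))^2)) ≤ 144 * X * (36/(w:ℝ)^2) :=
    mul_le_mul_of_nonneg_left hfirst (by positivity)
  have B : 288 * (∑' k : ℕ, (2 : ℝ) ^ (-((w + k : ℕ) : ℤ)) *
      (∑ i ∈ Finset.Ico 1 ((w + k) - 1), 1 / ((i : ℝ)^2 * (((w + k : ℕ) : ℝ) - (i : ℝ))^2))) ≤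
      288 * (X * (12/(w:ℝ)^2)) := by linarith
  have C : 144 * X * (36/(w:ℝ)^2) + 288 * (X * (12/(w:ℝ)^2)) = 8640 * X / (w:ℝ)^2 := by ring
  have D : (8640:ℝ) * X / (w:ℝ)^2 ≤ 10^4 * X / (w:ℝ)^2 := by
    have : (0:ℝ) ≤ X / (w:ℝ)^2 := by positivity
    have h : (8640:ℝ) * X / (w:ℝ)^2 = 8640 * (X/(w:ℝ)^2) := by ring
    have h2 : (10:ℝ)^4 * X / (w:ℝ)^2 = 10^4 * (X/(w:ℝ)^2) := by ring
    rw [h, h2]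
    nlinarith
  linarith
end
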